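/- arXiv:2410.10337 — 2 statements merged into one kernel-verified Lean document; each statement's English description precedes it below -/
import Mathlib

section
/- Let m ≥ 1 be fixed, let G be an NB-irreducible graph with ρ(G) = Λ(G), and let G^m be the graph obtained from G by replacing each edge of G by a path of length m (subdividing each edge into m edges). Then ρ(G^m) = Λ(G^m) = ρ(G)^{1/m}. -/
open Finset Filter

namespace NB

variable {V : Type} [Fintype V] [DecidableEq V] (G : SimpleGraph V) [DecidableRel G.Adj]

/-- Transition relation between darts: `e → f` iff the head of `e` is the tail of `f`
and `f` is not the reversal of `e`. -/
def Step (d e : G.Dart) : Prop := d.snd = e.fst ∧ e ≠ d.symm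

instance (d e : G.Dart) : Decidable (Step G d e) :=
  inferInstanceAs (Decidable (d.snd = e.fst ∧ e ≠ d.symm))

/-- `outdeg(e) = deg(h(e)) - 1`. -/
def outdeg (d : G.Dart) : ℕ := G.degree d.snd - 1

/-- `indeg(e) = deg(t(e)) - 1`. -/
def indeg (d : G.Dart) : ℕ := G.degree d.fst - 1

/-- The non-backtracking adjacency matrix. -/
def B : Matrix G.Dart G.Dart ℝ := fun d e => if Step G d e then 1 else 0

/-- The NBRW transition matrix. -/
noncomputable def transMat : Matrix G.Dart G.Dart ℝ :=
  fun d e => if Step G d e then ((outdeg G d : ℝ))⁻¹ else 0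

/-- NB-irreducibility: connected, min degree ≥ 2, max degree > 2. -/
def NBIrreducible : Prop :=
  G.Connected ∧ (∀ v, 2 ≤ G.degree v) ∧ (∃ v, 2 < G.degree v)

/-- `Λ(G)`, the geometric mean of out-degrees over directed edges. -/
noncomputable def Lambda : ℝ :=
  (∏ d : G.Dart, (outdeg G d : ℝ)) ^ ((Fintype.card G.Dart : ℝ)⁻¹)

/-- The Perron (largest real) eigenvalue of a matrix. -/
noncomputable def perron {n : Type} [Fintype n] (M : Matrix n n ℝ) : ℝ :=
  sSup {r : ℝ | ∃ v : n → ℝ, v ≠ 0 ∧ M.mulVec v = r • v}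

/-- A length-`ℓ` non-backtracking walk is a sequence of `ℓ+1` darts with consecutive
transitions. -/
def IsNBWalk {ℓ : ℕ} (ω : Fin (ℓ + 1) → G.Dart) : Prop :=
  ∀ i : Fin ℓ, Step G (ω i.castSucc) (ω i.succ)

instance {ℓ : ℕ} (ω : Fin (ℓ + 1) → G.Dart) : Decidable (IsNBWalk G ω) :=
  inferInstanceAs (Decidable (∀ i : Fin ℓ, Step G (ω i.castSucc) (ω i.succ)))

/-- The set `Ω_ℓ` of length-`ℓ` non-backtracking walks. -/
def NBWalk (ℓ : ℕ) : Type := {ω : Fin (ℓ + 1) → G.Dart // IsNBWalk G ω}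

instance (ℓ : ℕ) : Fintype (NBWalk G ℓ) := Subtype.fintype _

/-- The NBRW probability of a walk, started from the uniform stationary distribution. -/
noncomputable def mu {ℓ : ℕ} (ω : NBWalk G ℓ) : ℝ :=
  (Fintype.card G.Dart : ℝ)⁻¹ * ∏ i : Fin ℓ, ((outdeg G (ω.1 i.castSucc) : ℝ))⁻¹

/-- Expectation over `Ω_ℓ` with respect to `μ`. -/
noncomputable def expect {ℓ : ℕ} (X : NBWalk G ℓ → ℝ) : ℝ :=
  ∑ ω : NBWalk G ℓ, mu G ω * X ω

/-- Variance over `Ω_ℓ` with respect to `μ`. -/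
noncomputable def var {ℓ : ℕ} (X : NBWalk G ℓ → ℝ) : ℝ :=
  expect G (fun ω => (X ω - expect G X) ^ 2)

/-- `R_ℓ(ω) = ∑ log₂ outdeg(e_i)`: the number of random bits consumed. -/
noncomputable def bits {ℓ : ℕ} (ω : NBWalk G ℓ) : ℝ :=
  ∑ i : Fin ℓ, Real.logb 2 (outdeg G (ω.1 i.castSucc))

/-- A suspended path `(e_0, …, e_n)` (of length `n+1`). -/
def IsSuspendedPath {n : ℕ} (P : Fin (n + 1) → G.Dart) : Prop :=
  (∀ i : Fin n, Step G (P i.castSucc) (P i.succ)) ∧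
  (∀ i : Fin n, outdeg G (P i.castSucc) = 1) ∧
  1 < outdeg G (P (Fin.last n)) ∧
  (∀ i : Fin n, indeg G (P i.succ) = 1) ∧
  1 < indeg G (P 0)

/-- The suspended path condition: `outdeg(P)·indeg(P) = Λ(G)^{2|P|}`. -/
noncomputable def SuspendedPathCondition : Prop :=
  ∀ (n : ℕ) (P : Fin (n + 1) → G.Dart), IsSuspendedPath G P →
    (outdeg G (P (Fin.last n)) : ℝ) * (indeg G (P 0) : ℝ) = Lambda G ^ (2 * (n + 1))

/-- A non-backtracking cycle `(e_0, …, e_n)` (of length `n+1`). -/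
def IsNBCycle {n : ℕ} (C : Fin (n + 1) → G.Dart) : Prop :=
  ∀ i : Fin (n + 1), Step G (C i) (C (i + 1))

/-- The cycle condition: `∏_{e∈C} outdeg(e) = Λ(G)^{|C|}`. -/
noncomputable def CycleCondition : Prop :=
  ∀ (n : ℕ) (C : Fin (n + 1) → G.Dart), IsNBCycle G C →
    (∏ i : Fin (n + 1), (outdeg G (C i) : ℝ)) = Lambda G ^ (n + 1)


/-- The graph `G^m`, obtained from `G` by replacing each edge by a path of length `m`:
the vertices are the original vertices together with `m - 1` interior vertices on each
edge, and each edge of `G` becomes a path of `m` edges through its interior vertices. -/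
noncomputable def subdivide (m : ℕ) :
    SimpleGraph (V ⊕ (G.edgeSet × Fin (m - 1))) where
  Adj x y :=
    match x, y with
    | .inl u, .inl v => m = 1 ∧ G.Adj u v
    | .inl v, .inr (e, i) =>
        ((Quot.out (e : Sym2 V)).1 = v ∧ (i : ℕ) = 0) ∨
        ((Quot.out (e : Sym2 V)).2 = v ∧ (i : ℕ) = m - 2)
    | .inr (e, i), .inl v =>
        ((Quot.out (e : Sym2 V)).1 = v ∧ (i : ℕ) = 0) ∨
        ((Quot.out (e : Sym2 V)).2 = v ∧ (i : ℕ) = m - 2)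
    | .inr (e, i), .inr (f, j) =>
        e = f ∧ ((i : ℕ) + 1 = (j : ℕ) ∨ (j : ℕ) + 1 = (i : ℕ))
  symm := by
    constructor
    rintro (u | ⟨e, i⟩) (v | ⟨f, j⟩) h
    · exact ⟨h.1, h.2.symm⟩
    · exact h
    · exact h
    · exact ⟨h.1.symm, h.2.symm⟩
  loopless := by
    constructor
    rintro (u | ⟨e, i⟩) h
    · exact G.irrefl h.2
    · rcases h.2 with h2 | h2 <;> omega

noncomputable instance (m : ℕ) : DecidableRel (subdivide G m).Adj :=
  Classical.decRel _

section AuxSpectral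

/-- The set of real eigenvalues of a matrix. -/
def eigset {n : Type} [Fintype n] (M : Matrix n n ℝ) : Set ℝ :=
  {r : ℝ | ∃ v : n → ℝ, v ≠ 0 ∧ M.mulVec v = r • v}

lemma perron_eq_sSup {n : Type} [Fintype n] (M : Matrix n n ℝ) :
    perron M = sSup (eigset M) := rfl

lemma eigset_finite {n : Type} [Fintype n] [DecidableEq n] (M : Matrix n n ℝ) :
    (eigset M).Finite := by
  apply (Module.End.finite_spectrum (Matrix.toLin' M)).subset
  rintro r ⟨v, hv, hMv⟩
  rw [← Module.End.hasEigenvalue_iff_mem_spectrum]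
  exact Module.End.hasEigenvalue_of_hasEigenvector
    ⟨Module.End.mem_eigenspace_iff.mpr (by simpa [Matrix.toLin'_apply] using hMv), hv⟩

end AuxSpectral

section AuxSub

variable {V : Type} [Fintype V] [DecidableEq V] (G : SimpleGraph V) [DecidableRel G.Adj]

/-- canonical first endpoint of a `Sym2`. -/
noncomputable def ea (z : Sym2 V) : V := (Quot.out z).1

/-- canonical second endpoint of a `Sym2`. -/
noncomputable def eb (z : Sym2 V) : V := (Quot.out z).2

lemma mk_ea_eb (z : Sym2 V) : Sym2.mk (ea z) (eb z) = z := by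
  rw [ea, eb]
  exact Quot.out_eq z

lemma adj_ea_eb {z : Sym2 V} (hz : z ∈ G.edgeSet) : G.Adj (ea z) (eb z) := by
  rw [← SimpleGraph.mem_edgeSet, mk_ea_eb]; exact hz

lemma ea_ne_eb {z : Sym2 V} (hz : z ∈ G.edgeSet) : ea z ≠ eb z :=
  (adj_ea_eb G hz).ne

lemma dart_cases (d : G.Dart) :
    (d.fst = ea d.edge ∧ d.snd = eb d.edge) ∨ (d.fst = eb d.edge ∧ d.snd = ea d.edge) := by
  have h : Sym2.mk d.fst d.snd = Sym2.mk (ea d.edge) (eb d.edge) := by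
    rw [mk_ea_eb]; rfl
  rcases Sym2.eq_iff.mp h with ⟨h1, h2⟩ | ⟨h1, h2⟩
  · exact Or.inl ⟨h1, h2⟩
  · exact Or.inr ⟨h1, h2⟩

lemma dart_symm_ne (d : G.Dart) : d.symm ≠ d := SimpleGraph.Dart.symm_ne d

lemma dart_eq_of_edge_fst {d d' : G.Dart} (he : d.edge = d'.edge) (hf : d.fst = d'.fst) :
    d = d' := by
  rcases (SimpleGraph.dart_edge_eq_iff d d').mp he with h | h
  · exact h
  · exfalso
    rw [h] at hf
    exact d'.adj.ne hf.symm

end AuxSub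

section AuxSub2

variable {V : Type} [Fintype V] [DecidableEq V] (G : SimpleGraph V) [DecidableRel G.Adj]
variable (m : ℕ)

@[simp] lemma subdiv_adj_inl_inl (u v : V) :
    (subdivide G m).Adj (.inl u) (.inl v) ↔ (m = 1 ∧ G.Adj u v) := Iff.rfl

@[simp] lemma subdiv_adj_inl_inr (v : V) (e : G.edgeSet) (i : Fin (m - 1)) :
    (subdivide G m).Adj (.inl v) (.inr (e, i)) ↔
      ((ea (e : Sym2 V) = v ∧ (i : ℕ) = 0) ∨ (eb (e : Sym2 V) = v ∧ (i : ℕ) = m - 2)) :=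
  Iff.rfl

@[simp] lemma subdiv_adj_inr_inl (v : V) (e : G.edgeSet) (i : Fin (m - 1)) :
    (subdivide G m).Adj (.inr (e, i)) (.inl v) ↔
      ((ea (e : Sym2 V) = v ∧ (i : ℕ) = 0) ∨ (eb (e : Sym2 V) = v ∧ (i : ℕ) = m - 2)) :=
  Iff.rfl

@[simp] lemma subdiv_adj_inr_inr (e f : G.edgeSet) (i j : Fin (m - 1)) :
    (subdivide G m).Adj (.inr (e, i)) (.inr (f, j)) ↔
      (e = f ∧ ((i : ℕ) + 1 = (j : ℕ) ∨ (j : ℕ) + 1 = (i : ℕ))) := Iff.rfl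

/-- The `j`-th vertex along the path replacing the dart `d` in `G^m`. -/
noncomputable def pvert (d : G.Dart) (j : ℕ) : V ⊕ (G.edgeSet × Fin (m - 1)) :=
  if h0 : j = 0 then .inl d.fst
  else if hm2 : m ≤ j then .inl d.snd
  else .inr (⟨d.edge, d.edge_mem⟩,
    if d.fst = ea d.edge then ⟨j - 1, by omega⟩ else ⟨m - 1 - j, by omega⟩)

@[simp] lemma pvert_zero (d : G.Dart) : pvert G m d 0 = .inl d.fst := by
  simp [pvert]

lemma pvert_last (d : G.Dart) {j : ℕ} (hj : m ≤ j) (h0 : j ≠ 0) :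
    pvert G m d j = .inl d.snd := by
  rw [pvert, dif_neg h0, dif_pos hj]

lemma pvert_mid (d : G.Dart) {j : ℕ} (h0 : 0 < j) (hjm : j < m) :
    pvert G m d j = .inr (⟨d.edge, d.edge_mem⟩,
      if d.fst = ea d.edge then ⟨j - 1, by omega⟩ else ⟨m - 1 - j, by omega⟩) := by
  rw [pvert, dif_neg (by omega), dif_neg (by omega)]

lemma pvert_inj (d : G.Dart) {j j' : ℕ} (hj : j ≤ m) (hj' : j' ≤ m)
    (h : pvert G m d j = pvert G m d j') : j = j' := by
  have hne := d.adj.ne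
  rcases Nat.eq_zero_or_pos j with h0 | h0 <;> rcases Nat.eq_zero_or_pos j' with h0' | h0'
  · omega
  · subst h0
    rcases Nat.lt_or_ge j' m with hlt | hge
    · rw [pvert_zero, pvert_mid G m d h0' hlt] at h; simp at h
    · rw [pvert_zero, pvert_last G m d hge (by omega)] at h
      simp only [Sum.inl.injEq] at h; exact absurd h hne
  · subst h0'
    rcases Nat.lt_or_ge j m with hlt | hge
    · rw [pvert_zero, pvert_mid G m d h0 hlt] at h; simp at h
    · rw [pvert_zero, pvert_last G m d hge (by omega)] at h
      simp only [Sum.inl.injEq] at h; exact absurd h.symm hne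
  · rcases Nat.lt_or_ge j m with hlt | hge <;> rcases Nat.lt_or_ge j' m with hlt' | hge'
    · rw [pvert_mid G m d h0 hlt, pvert_mid G m d h0' hlt'] at h
      simp only [Sum.inr.injEq, Prod.mk.injEq, Subtype.mk.injEq] at h
      rcases h with ⟨-, h⟩
      by_cases hc : d.fst = ea d.edge
      · simp only [if_pos hc, Fin.mk.injEq] at h; omega
      · simp only [if_neg hc, Fin.mk.injEq] at h; omega
    · rw [pvert_mid G m d h0 hlt, pvert_last G m d hge' (by omega)] at h; simp at h
    · rw [pvert_last G m d hge (by omega), pvert_mid G m d h0' hlt'] at h; simp at h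
    · omega

lemma pvert_symm (hm : 1 ≤ m) (d : G.Dart) (j : ℕ) :
    pvert G m d.symm j = pvert G m d (m - j) := by
  have hne := d.adj.ne
  have hab := ea_ne_eb G d.edge_mem
  rcases Nat.eq_zero_or_pos j with h0 | h0
  · subst h0
    rw [pvert_zero, Nat.sub_zero, pvert_last G m d le_rfl (by omega)]; rfl
  rcases Nat.lt_or_ge j m with hlt | hge
  · rw [pvert_mid G m d.symm h0 hlt, pvert_mid G m d (by omega) (by omega)]
    simp only [Sum.inr.injEq, Prod.mk.injEq, Subtype.mk.injEq]
    have hse : d.symm.edge = d.edge := d.edge_symm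
    refine ⟨hse, ?_⟩
    simp only [hse]
    have hsf : d.symm.fst = d.snd := rfl
    rw [hsf]
    rcases dart_cases G d with ⟨h1, h2⟩ | ⟨h1, h2⟩
    · rw [if_neg (by rw [h2]; exact hab.symm), if_pos h1]
      refine Fin.ext ?_
      show m - 1 - j = m - j - 1
      omega
    · rw [if_pos h2, if_neg (by rw [h1]; exact hab.symm)]
      refine Fin.ext ?_
      show j - 1 = m - 1 - (m - j)
      omega
  · rw [pvert_last G m d.symm hge (by omega)]
    have h00 : m - j = 0 := by omega
    rw [h00, pvert_zero]; rfl

lemma pvert_adj (d : G.Dart) {k : ℕ} (hk : k < m) :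
    (subdivide G m).Adj (pvert G m d k) (pvert G m d (k + 1)) := by
  have hab := ea_ne_eb G d.edge_mem
  rcases Nat.eq_zero_or_pos k with h0 | h0
  · subst h0
    rcases Nat.lt_or_ge 1 m with h1 | h1
    · rw [pvert_zero, pvert_mid G m d (by omega) h1]
      rw [subdiv_adj_inl_inr]
      rcases dart_cases G d with ⟨ha, hb⟩ | ⟨ha, hb⟩
      · refine Or.inl ⟨ha.symm, ?_⟩
        rw [if_pos ha]
      · refine Or.inr ⟨ha.symm, ?_⟩
        rw [if_neg (by rw [ha]; exact hab.symm)]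
        show m - 1 - 1 = m - 2
        omega
    · have hm1 : m = 1 := by omega
      rw [pvert_zero, pvert_last G m d (by omega) (by omega), subdiv_adj_inl_inl]
      exact ⟨hm1, d.adj⟩
  · rcases Nat.lt_or_ge (k + 1) m with h1 | h1
    · rw [pvert_mid G m d h0 hk, pvert_mid G m d (by omega) h1, subdiv_adj_inr_inr]
      refine ⟨rfl, ?_⟩
      by_cases hc : d.fst = ea d.edge
      · rw [if_pos hc, if_pos hc]
        left
        show (k - 1) + 1 = (k + 1) - 1
        omega
      · rw [if_neg hc, if_neg hc]
        right
        show (m - 1 - (k + 1)) + 1 = m - 1 - k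
        omega
    · rw [pvert_mid G m d h0 hk, pvert_last G m d (by omega) (by omega), subdiv_adj_inr_inl]
      rcases dart_cases G d with ⟨ha, hb⟩ | ⟨ha, hb⟩
      · refine Or.inr ⟨hb.symm, ?_⟩
        rw [if_pos ha]
        show k - 1 = m - 2
        omega
      · refine Or.inl ⟨hb.symm, ?_⟩
        rw [if_neg (by rw [ha]; exact hab.symm)]
        show m - 1 - k = 0
        omega

end AuxSub2

section AuxSub3

variable {V : Type} [Fintype V] [DecidableEq V] (G : SimpleGraph V) [DecidableRel G.Adj]
variable (m : ℕ)

/-- The `k`-th dart along the path replacing the dart `d` in `G^m`. -/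
noncomputable def pdart (d : G.Dart) (k : Fin m) : (subdivide G m).Dart :=
  ⟨(pvert G m d k, pvert G m d (k + 1)), pvert_adj G m d k.isLt⟩

@[simp] lemma pdart_fst (d : G.Dart) (k : Fin m) :
    (pdart G m d k).fst = pvert G m d k := rfl

@[simp] lemma pdart_snd (d : G.Dart) (k : Fin m) :
    (pdart G m d k).snd = pvert G m d (k + 1) := rfl

lemma pdart_symm (d : G.Dart) (k : Fin m) :
    (pdart G m d k).symm = pdart G m d.symm ⟨m - 1 - k, by omega⟩ := by
  have hm : 1 ≤ m := by have := k.isLt; omega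
  have hk := k.isLt
  apply SimpleGraph.Dart.ext
  show ((pvert G m d (k+1), pvert G m d k) : _ × _) = _
  have e1 : m - (m - 1 - (k:ℕ)) = k + 1 := by omega
  have e2 : m - (m - 1 - (k:ℕ) + 1) = k := by omega
  show _ = ((pvert G m d.symm (m - 1 - k), pvert G m d.symm (m - 1 - k + 1)) : _ × _)
  rw [pvert_symm G m hm, pvert_symm G m hm, e1, e2]

/-- decoding an interior vertex equality. -/
lemma pvert_eq_mid_cases {d d' : G.Dart} {j j' : ℕ} (h0 : 0 < j) (hjm : j < m)
    (hj' : j' ≤ m) (h : pvert G m d j = pvert G m d' j') :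
    (d' = d ∧ j' = j) ∨ (d' = d.symm ∧ j' = m - j) := by
  have hm : 1 ≤ m := by omega
  -- first, j' is interior
  have hj'0 : 0 < j' := by
    rcases Nat.eq_zero_or_pos j' with h0' | h0'
    · subst h0'; rw [pvert_mid G m d h0 hjm, pvert_zero] at h; simp at h
    · exact h0'
  have hj'm : j' < m := by
    rcases Nat.lt_or_ge j' m with h' | h'
    · exact h'
    · rw [pvert_mid G m d h0 hjm, pvert_last G m d' h' (by omega)] at h; simp at h
  -- edges agree
  have hedge : d.edge = d'.edge := by
    rw [pvert_mid G m d h0 hjm, pvert_mid G m d' hj'0 hj'm] at h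
    simp only [Sum.inr.injEq, Prod.mk.injEq, Subtype.mk.injEq] at h
    exact h.1
  rcases (SimpleGraph.dart_edge_eq_iff d d').mp hedge with hdd | hdd
  · left
    refine ⟨hdd.symm, ?_⟩
    rw [← hdd] at h
    exact (pvert_inj G m d (by omega) hj' h).symm
  · right
    have hdd' : d' = d.symm := by rw [hdd, SimpleGraph.Dart.symm_symm]
    refine ⟨hdd', ?_⟩
    rw [hdd, pvert_symm G m hm] at h
    have := pvert_inj G m d' (by omega) (by omega) h
    omega

lemma pdart_inj : Function.Injective (fun p : G.Dart × Fin m => pdart G m p.1 p.2) := by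
  rintro ⟨d, k⟩ ⟨d', k'⟩ h
  have hk := k.isLt
  have hk' := k'.isLt
  have h1 : pvert G m d k = pvert G m d' k' :=
    congrArg (fun x : (subdivide G m).Dart => x.toProd.1) h
  have h2 : pvert G m d ((k:ℕ) + 1) = pvert G m d' ((k':ℕ) + 1) :=
    congrArg (fun x : (subdivide G m).Dart => x.toProd.2) h
  rcases Nat.eq_zero_or_pos (k:ℕ) with h0 | h0
  · -- k = 0
    have h0' : (k':ℕ) = 0 := by
      rcases Nat.eq_zero_or_pos (k':ℕ) with h' | h'
      · exact h'
      · exfalso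
        rw [h0, pvert_zero, pvert_mid G m d' h' hk'] at h1
        simp at h1
    have hff : d.fst = d'.fst := by
      rw [h0, h0', pvert_zero, pvert_zero] at h1
      simpa using h1
    rcases Nat.lt_or_ge 1 m with hm2 | hm1
    · -- m ≥ 2, use interior decode on h2
      rw [h0, h0'] at h2
      rcases pvert_eq_mid_cases G m (by omega) hm2 (by omega) h2 with ⟨hdd, -⟩ | ⟨hdd, he⟩
      · subst hdd; simp [Prod.ext_iff, Fin.ext_iff]; omega
      · exfalso
        rw [hdd] at hff
        exact d.adj.ne hff
    · -- m = 1
      have hm1' : m = 1 := by omega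
      have hss : d.snd = d'.snd := by
        rw [h0, h0', pvert_last G m d (by omega) (by omega),
          pvert_last G m d' (by omega) (by omega)] at h2
        simpa using h2
      have : d = d' := by
        apply SimpleGraph.Dart.ext
        exact Prod.ext hff hss
      simp [this, Prod.ext_iff, Fin.ext_iff]; omega
  · -- k ≥ 1 : fst is interior
    rcases pvert_eq_mid_cases G m h0 hk (by omega) h1 with ⟨hdd, hkk⟩ | ⟨hdd, hkk⟩
    · subst hdd; simp [Prod.ext_iff, Fin.ext_iff]; omega
    · exfalso
      rw [hdd, hkk, pvert_symm G m (by omega)] at h2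
      have hmk : m - (m - (k:ℕ) + 1) = k - 1 := by omega
      rw [hmk] at h2
      have := pvert_inj G m d (by omega) (by omega) h2
      omega

end AuxSub3

section AuxSub4

variable {V : Type} [Fintype V] [DecidableEq V] (G : SimpleGraph V) [DecidableRel G.Adj]
variable (m : ℕ)

/-- The dart along an edge in the canonical direction. -/
noncomputable def dab (e : G.edgeSet) : G.Dart :=
  ⟨(ea (e : Sym2 V), eb (e : Sym2 V)), adj_ea_eb G e.2⟩

/-- The dart along an edge opposite to the canonical direction. -/
noncomputable def dba (e : G.edgeSet) : G.Dart :=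
  ⟨(eb (e : Sym2 V), ea (e : Sym2 V)), (adj_ea_eb G e.2).symm⟩

lemma dab_edge (e : G.edgeSet) : (dab G e).edge = (e : Sym2 V) := mk_ea_eb _

lemma dba_edge (e : G.edgeSet) : (dba G e).edge = (e : Sym2 V) := by
  show Sym2.mk (eb (e : Sym2 V)) (ea (e : Sym2 V)) = (e : Sym2 V)
  rw [Sym2.eq_swap]
  exact mk_ea_eb _

lemma inr_fin_congr {e : G.edgeSet} {i i' : Fin (m - 1)} (h : (i : ℕ) = (i' : ℕ)) :
    (Sum.inr (e, i) : V ⊕ (G.edgeSet × Fin (m - 1))) = Sum.inr (e, i') :=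
  congrArg (fun t => Sum.inr (e, t)) (Fin.ext h)

lemma pvert_dab_mid (e : G.edgeSet) {j : ℕ} (h0 : 0 < j) (hjm : j < m) :
    pvert G m (dab G e) j = .inr (e, ⟨j - 1, by omega⟩) := by
  rw [pvert_mid G m _ h0 hjm]
  simp only [dab_edge]
  rw [if_pos (show (dab G e).fst = ea (e : Sym2 V) from rfl)]

lemma pvert_dba_mid (e : G.edgeSet) {j : ℕ} (h0 : 0 < j) (hjm : j < m) :
    pvert G m (dba G e) j = .inr (e, ⟨m - 1 - j, by omega⟩) := by
  rw [pvert_mid G m _ h0 hjm]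
  simp only [dba_edge]
  rw [if_neg (show ¬((dba G e).fst = ea (e : Sym2 V)) from
    fun hc => ea_ne_eb G e.2 hc.symm)]

lemma pdart_surj (hm : 1 ≤ m) :
    Function.Surjective (fun p : G.Dart × Fin m => pdart G m p.1 p.2) := by
  rintro ⟨⟨a | ⟨e, i⟩, b | ⟨f, j⟩⟩, hadj⟩
  · -- inl a, inl b
    obtain ⟨hm1, hab⟩ := hadj
    refine ⟨⟨⟨(a, b), hab⟩, ⟨0, by omega⟩⟩, ?_⟩
    apply SimpleGraph.Dart.ext
    refine Prod.ext ?_ ?_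
    · show pvert G m _ 0 = Sum.inl a
      rw [pvert_zero]
    · show pvert G m _ (0 + 1) = Sum.inl b
      rw [pvert_last G m _ (by omega) (by omega)]
  · -- inl a, inr (f, j)
    have hm2 : 2 ≤ m := by have := j.isLt; omega
    have hj := j.isLt
    rcases hadj with ⟨hfa, hjv⟩ | ⟨hfa, hjv⟩
    · refine ⟨⟨dab G f, ⟨0, by omega⟩⟩, ?_⟩
      apply SimpleGraph.Dart.ext
      refine Prod.ext ?_ ?_
      · show pvert G m (dab G f) 0 = Sum.inl a
        rw [pvert_zero]
        exact congrArg Sum.inl hfa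
      · show pvert G m (dab G f) (0 + 1) = Sum.inr (f, j)
        rw [pvert_dab_mid G m f (by omega) (by omega)]
        exact inr_fin_congr G m (by simp only [Fin.val_mk]; omega)
    · refine ⟨⟨dba G f, ⟨0, by omega⟩⟩, ?_⟩
      apply SimpleGraph.Dart.ext
      refine Prod.ext ?_ ?_
      · show pvert G m (dba G f) 0 = Sum.inl a
        rw [pvert_zero]
        exact congrArg Sum.inl hfa
      · show pvert G m (dba G f) (0 + 1) = Sum.inr (f, j)
        rw [pvert_dba_mid G m f (by omega) (by omega)]
        exact inr_fin_congr G m (by simp only [Fin.val_mk]; omega)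
  · -- inr (e, i), inl b
    have hm2 : 2 ≤ m := by have := i.isLt; omega
    have hi := i.isLt
    rcases hadj with ⟨hea, hiv⟩ | ⟨heb, hiv⟩
    · refine ⟨⟨dba G e, ⟨m - 1, by omega⟩⟩, ?_⟩
      apply SimpleGraph.Dart.ext
      refine Prod.ext ?_ ?_
      · show pvert G m (dba G e) (m - 1) = Sum.inr (e, i)
        rw [pvert_dba_mid G m e (by omega) (by omega)]
        exact inr_fin_congr G m (by simp only [Fin.val_mk]; omega)
      · show pvert G m (dba G e) (m - 1 + 1) = Sum.inl b
        rw [pvert_last G m _ (by omega) (by omega)]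
        exact congrArg Sum.inl hea
    · refine ⟨⟨dab G e, ⟨m - 1, by omega⟩⟩, ?_⟩
      apply SimpleGraph.Dart.ext
      refine Prod.ext ?_ ?_
      · show pvert G m (dab G e) (m - 1) = Sum.inr (e, i)
        rw [pvert_dab_mid G m e (by omega) (by omega)]
        exact inr_fin_congr G m (by simp only [Fin.val_mk]; omega)
      · show pvert G m (dab G e) (m - 1 + 1) = Sum.inl b
        rw [pvert_last G m _ (by omega) (by omega)]
        exact congrArg Sum.inl heb
  · -- inr (e, i), inr (f, j)
    have hm2 : 2 ≤ m := by have := i.isLt; omega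
    have hi := i.isLt
    have hj := j.isLt
    obtain ⟨rfl, hij⟩ := hadj
    rcases hij with hij | hij
    · refine ⟨⟨dab G e, ⟨(i : ℕ) + 1, by omega⟩⟩, ?_⟩
      apply SimpleGraph.Dart.ext
      refine Prod.ext ?_ ?_
      · show pvert G m (dab G e) ((i : ℕ) + 1) = Sum.inr (e, i)
        rw [pvert_dab_mid G m e (by omega) (by omega)]
        exact inr_fin_congr G m (by simp only [Fin.val_mk]; omega)
      · show pvert G m (dab G e) ((i : ℕ) + 1 + 1) = Sum.inr (e, j)
        rw [pvert_dab_mid G m e (by omega) (by omega)]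
        exact inr_fin_congr G m (by simp only [Fin.val_mk]; omega)
    · refine ⟨⟨dba G e, ⟨m - 1 - (i : ℕ), by omega⟩⟩, ?_⟩
      apply SimpleGraph.Dart.ext
      refine Prod.ext ?_ ?_
      · show pvert G m (dba G e) (m - 1 - (i : ℕ)) = Sum.inr (e, i)
        rw [pvert_dba_mid G m e (by omega) (by omega)]
        exact inr_fin_congr G m (by simp only [Fin.val_mk]; omega)
      · show pvert G m (dba G e) (m - 1 - (i : ℕ) + 1) = Sum.inr (e, j)
        rw [pvert_dba_mid G m e (by omega) (by omega)]
        exact inr_fin_congr G m (by simp only [Fin.val_mk]; omega)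

lemma pdart_bij (hm : 1 ≤ m) :
    Function.Bijective (fun p : G.Dart × Fin m => pdart G m p.1 p.2) :=
  ⟨pdart_inj G m, pdart_surj G m hm⟩

end AuxSub4

section AuxSub5

variable {V : Type} [Fintype V] [DecidableEq V] (G : SimpleGraph V) [DecidableRel G.Adj]
variable (m : ℕ)

lemma pvert_inl_cases {d : G.Dart} {j : ℕ} {x : V} (hj : j < m)
    (h : pvert G m d j = .inl x) : j = 0 ∧ x = d.fst := by
  rcases Nat.eq_zero_or_pos j with h0 | h0
  · subst h0; rw [pvert_zero] at h
    exact ⟨rfl, (Sum.inl.injEq _ _ ▸ h).symm⟩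
  · rw [pvert_mid G m d h0 hj] at h; simp at h

lemma pdart_eq_iff (hm : 1 ≤ m) (d d' : G.Dart) (k k' : Fin m) :
    pdart G m d k = pdart G m d' k' ↔ (d = d' ∧ k = k') := by
  constructor
  · intro h
    have := pdart_inj G m (a₁ := (d, k)) (a₂ := (d', k')) h
    exact ⟨congrArg Prod.fst this, congrArg Prod.snd this⟩
  · rintro ⟨rfl, rfl⟩; rfl

lemma step_pdart_iff (hm : 1 ≤ m) (d d' : G.Dart) (k k' : Fin m) :
    Step (subdivide G m) (pdart G m d k) (pdart G m d' k') ↔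
      ((d' = d ∧ (k' : ℕ) = (k : ℕ) + 1) ∨
        ((k : ℕ) = m - 1 ∧ (k' : ℕ) = 0 ∧ Step G d d')) := by
  have hk := k.isLt
  have hk' := k'.isLt
  rw [Step]
  rw [pdart_symm G m d k]
  constructor
  · rintro ⟨hfst, hne⟩
    rw [pdart_snd, pdart_fst] at hfst
    rw [Ne, pdart_eq_iff G m hm] at hne
    by_cases hkm : (k : ℕ) + 1 = m
    · right
      obtain ⟨h0, hx⟩ := pvert_inl_cases G m hk'
        (hfst.symm.trans (pvert_last G m d (by omega) (by omega)))
      refine ⟨by omega, h0, hx, ?_⟩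
      intro hds
      exact hne ⟨hds, by simp only [Fin.ext_iff, Fin.val_mk]; omega⟩
    · left
      rcases pvert_eq_mid_cases G m (j := (k:ℕ)+1) (by omega) (by omega) (by omega) hfst
        with ⟨hdd, hkk⟩ | ⟨hdd, hkk⟩
      · exact ⟨hdd, hkk⟩
      · exact absurd ⟨hdd, by simp only [Fin.ext_iff, Fin.val_mk]; omega⟩ hne
  · rintro (⟨hd', hkk⟩ | ⟨hkm, hk0, hstep⟩)
    · subst hd'
      refine ⟨?_, ?_⟩
      · rw [pdart_snd, pdart_fst, hkk]
      · rw [Ne, pdart_eq_iff G m hm]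
        rintro ⟨hds, -⟩
        exact dart_symm_ne G _ hds.symm
    · refine ⟨?_, ?_⟩
      · rw [pdart_snd, pdart_fst]
        have h1 : pvert G m d ((k:ℕ) + 1) = .inl d.snd :=
          pvert_last G m d (by omega) (by omega)
        have h2 : pvert G m d' (k' : ℕ) = .inl d'.fst := by rw [hk0, pvert_zero]
        rw [h1, h2, hstep.1]
      · rw [Ne, pdart_eq_iff G m hm]
        rintro ⟨hds, -⟩
        exact hstep.2 hds

end AuxSub5

section AuxSub6

variable {V : Type} [Fintype V] [DecidableEq V] (G : SimpleGraph V) [DecidableRel G.Adj]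
variable (m : ℕ)

lemma degree_inl (hm : 1 ≤ m) (v : V) :
    (subdivide G m).degree (.inl v) = G.degree v := by
  rcases Nat.lt_or_ge 1 m with hm2 | hm1
  · -- m ≥ 2
    rw [SimpleGraph.degree, SimpleGraph.degree]
    refine Finset.card_nbij'
      (i := fun y => match y with
        | .inl _ => v
        | .inr (e, _) => if ea (e : Sym2 V) = v then eb (e : Sym2 V) else ea (e : Sym2 V))
      (j := fun u => if h : G.Adj v u then
          Sum.inr (⟨Sym2.mk v u, h⟩,
            if ea (Sym2.mk v u) = v then ⟨0, by omega⟩ else ⟨m - 2, by omega⟩)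
        else Sum.inl v) ?_ ?_ ?_ ?_
    · intro y hy
      rw [Finset.mem_coe, SimpleGraph.mem_neighborFinset] at hy ⊢
      rcases y with u | ⟨e, i⟩
      · rw [subdiv_adj_inl_inl] at hy; omega
      · rw [subdiv_adj_inl_inr] at hy
        dsimp only
        rcases hy with ⟨ha, -⟩ | ⟨hb, -⟩
        · rw [if_pos ha, ← ha]; exact adj_ea_eb G e.2
        · rw [if_neg (fun hc => ea_ne_eb G e.2 (hc.trans hb.symm)), ← hb]
          exact (adj_ea_eb G e.2).symm
    · intro u hu
      rw [Finset.mem_coe, SimpleGraph.mem_neighborFinset] at hu ⊢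
      dsimp only
      rw [dif_pos hu, subdiv_adj_inl_inr]
      rcases Sym2.eq_iff.mp (mk_ea_eb (Sym2.mk v u)) with ⟨ha, hb⟩ | ⟨ha, hb⟩
      · exact Or.inl ⟨ha, by rw [if_pos ha]⟩
      · refine Or.inr ⟨hb, ?_⟩
        rw [if_neg (fun hc => hu.ne' (ha.symm.trans hc))]
    · intro y hy
      rw [Finset.mem_coe, SimpleGraph.mem_neighborFinset] at hy
      rcases y with u | ⟨e, i⟩
      · rw [subdiv_adj_inl_inl] at hy; omega
      · rw [subdiv_adj_inl_inr] at hy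
        dsimp only
        rcases hy with ⟨ha, hi0⟩ | ⟨hb, him⟩
        · rw [if_pos ha]
          have hadj : G.Adj v (eb (e : Sym2 V)) := ha ▸ adj_ea_eb G e.2
          rw [dif_pos hadj]
          have hse : Sym2.mk v (eb (e : Sym2 V)) = (e : Sym2 V) := by
            rw [← ha]; exact mk_ea_eb _
          simp only [Sum.inr.injEq, Prod.mk.injEq]
          refine ⟨Subtype.ext hse, ?_⟩
          rw [if_pos (by rw [hse]; exact ha)]
          simp only [Fin.ext_iff, Fin.val_mk]; omega
        · rw [if_neg (fun hc => ea_ne_eb G e.2 (hc.trans hb.symm))]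
          have hadj : G.Adj v (ea (e : Sym2 V)) := hb ▸ (adj_ea_eb G e.2).symm
          rw [dif_pos hadj]
          have hse : Sym2.mk v (ea (e : Sym2 V)) = (e : Sym2 V) := by
            rw [← hb, Sym2.eq_swap]; exact mk_ea_eb _
          simp only [Sum.inr.injEq, Prod.mk.injEq]
          refine ⟨Subtype.ext hse, ?_⟩
          rw [if_neg (by rw [hse]; exact fun hc => ea_ne_eb G e.2 (hc.trans hb.symm))]
          simp only [Fin.ext_iff, Fin.val_mk]; omega
    · intro u hu
      rw [Finset.mem_coe, SimpleGraph.mem_neighborFinset] at hu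
      dsimp only
      rw [dif_pos hu]
      dsimp only
      rcases Sym2.eq_iff.mp (mk_ea_eb (Sym2.mk v u)) with ⟨ha, hb⟩ | ⟨ha, hb⟩
      · rw [if_pos ha]; exact hb
      · rw [if_neg (fun hc => hu.ne' (ha.symm.trans hc))]; exact ha
  · -- m = 1
    have hne : (subdivide G m).neighborFinset (.inl v) =
        (G.neighborFinset v).image Sum.inl := by
      ext y
      rcases y with u | ⟨e, i⟩
      · simp only [SimpleGraph.mem_neighborFinset, subdiv_adj_inl_inl, Finset.mem_image,
          Sum.inl.injEq]
        constructor
        · rintro ⟨-, hadj⟩; exact ⟨u, hadj, rfl⟩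
        · rintro ⟨u', hu', rfl⟩
          exact ⟨by omega, hu'⟩
      · have := i.isLt
        constructor
        · intro hy; exact absurd this (by omega)
        · intro hy; exact absurd this (by omega)
    rw [SimpleGraph.degree, SimpleGraph.degree, hne,
      Finset.card_image_of_injective _ Sum.inl_injective]

lemma degree_inr (e : G.edgeSet) (i : Fin (m - 1)) :
    (subdivide G m).degree (.inr (e, i)) = 2 := by
  have hii := i.isLt
  have hm2 : 2 ≤ m := by omega
  have hab := ea_ne_eb G e.2
  set x₁ : V ⊕ (G.edgeSet × Fin (m - 1)) :=
    (if (i : ℕ) = 0 then Sum.inl (ea (e : Sym2 V))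
      else Sum.inr (e, ⟨(i : ℕ) - 1, by omega⟩)) with hx₁
  set x₂ : V ⊕ (G.edgeSet × Fin (m - 1)) :=
    (if h : (i : ℕ) = m - 2 then Sum.inl (eb (e : Sym2 V))
      else Sum.inr (e, ⟨(i : ℕ) + 1, by omega⟩)) with hx₂
  have hset : (subdivide G m).neighborFinset (.inr (e, i)) = {x₁, x₂} := by
    ext y
    rw [SimpleGraph.mem_neighborFinset, Finset.mem_insert, Finset.mem_singleton]
    rcases y with v | ⟨f, j⟩
    · rw [subdiv_adj_inr_inl]
      constructor
      · rintro (⟨ha, hi0⟩ | ⟨hb, him⟩)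
        · left; rw [hx₁, if_pos hi0, ha]
        · right; rw [hx₂, dif_pos him, hb]
      · rintro (h | h)
        · by_cases hi0 : (i : ℕ) = 0
          · rw [hx₁, if_pos hi0] at h
            exact Or.inl ⟨(Sum.inl.injEq _ _ ▸ h).symm, hi0⟩
          · rw [hx₁, if_neg hi0] at h; simp at h
        · by_cases him : (i : ℕ) = m - 2
          · rw [hx₂, dif_pos him] at h
            exact Or.inr ⟨(Sum.inl.injEq _ _ ▸ h).symm, him⟩
          · rw [hx₂, dif_neg him] at h; simp at h
    · rw [subdiv_adj_inr_inr]
      constructor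
      · rintro ⟨rfl, hij | hij⟩
        · have hj := j.isLt
          right; rw [hx₂, dif_neg (by omega)]
          simp only [Sum.inr.injEq, Prod.mk.injEq, Fin.ext_iff, Fin.val_mk]
          exact ⟨by trivial, by omega⟩
        · left; rw [hx₁, if_neg (by omega)]
          simp only [Sum.inr.injEq, Prod.mk.injEq, Fin.ext_iff, Fin.val_mk]
          exact ⟨by trivial, by omega⟩
      · rintro (h | h)
        · by_cases hi0 : (i : ℕ) = 0
          · rw [hx₁, if_pos hi0] at h; simp at h
          · rw [hx₁, if_neg hi0] at h
            simp only [Sum.inr.injEq, Prod.mk.injEq, Fin.ext_iff, Fin.val_mk] at h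
            exact ⟨h.1.symm, Or.inr (by omega)⟩
        · by_cases him : (i : ℕ) = m - 2
          · rw [hx₂, dif_pos him] at h; simp at h
          · rw [hx₂, dif_neg him] at h
            simp only [Sum.inr.injEq, Prod.mk.injEq, Fin.ext_iff, Fin.val_mk] at h
            exact ⟨h.1.symm, Or.inl (by omega)⟩
  rw [SimpleGraph.degree, hset]
  rw [Finset.card_insert_of_notMem, Finset.card_singleton]
  rw [Finset.mem_singleton]
  by_cases hi0 : (i : ℕ) = 0 <;> by_cases him : (i : ℕ) = m - 2
  · rw [hx₁, hx₂, if_pos hi0, dif_pos him]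
    simp only [Sum.inl.injEq]; exact hab
  · rw [hx₁, hx₂, if_pos hi0, dif_neg him]; simp
  · rw [hx₁, hx₂, if_neg hi0, dif_pos him]; simp
  · rw [hx₁, hx₂, if_neg hi0, dif_neg him]
    simp only [Sum.inr.injEq, Prod.mk.injEq, Fin.ext_iff, ne_eq]
    rintro ⟨-, hc⟩; omega

lemma outdeg_pdart (hm : 1 ≤ m) (d : G.Dart) (k : Fin m) :
    outdeg (subdivide G m) (pdart G m d k) =
      if (k : ℕ) = m - 1 then outdeg G d else 1 := by
  have hk := k.isLt
  rw [outdeg, pdart_snd]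
  by_cases hkm : (k : ℕ) = m - 1
  · rw [if_pos hkm, pvert_last G m d (by omega) (by omega), degree_inl G m hm, outdeg]
  · rw [if_neg hkm, pvert_mid G m d (by omega) (by omega), degree_inr G m]

end AuxSub6

section AuxSub7

variable {V : Type} [Fintype V] [DecidableEq V] (G : SimpleGraph V) [DecidableRel G.Adj]
variable (m : ℕ)

lemma mulVec_B_apply {W : Type} [Fintype W] [DecidableEq W] (H : SimpleGraph W)
    [DecidableRel H.Adj] (w : H.Dart → ℝ) (x : H.Dart) :
    (B H).mulVec w x = ∑ y : H.Dart, (if Step H x y then (1 : ℝ) else 0) * w y := by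
  simp [Matrix.mulVec, dotProduct, B]

lemma mulVec_pdart_mid (hm : 1 ≤ m) (w : (subdivide G m).Dart → ℝ) (d : G.Dart)
    (k : Fin m) (hk : (k : ℕ) < m - 1) :
    (B (subdivide G m)).mulVec w (pdart G m d k) =
      w (pdart G m d ⟨(k : ℕ) + 1, by omega⟩) := by
  rw [mulVec_B_apply]
  rw [← Fintype.sum_bijective _ (pdart_bij G m hm)
    (fun p : G.Dart × Fin m =>
      (if Step (subdivide G m) (pdart G m d k) (pdart G m p.1 p.2) then (1 : ℝ) else 0) *
        w (pdart G m p.1 p.2)) _ (fun p => rfl)]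
  rw [Fintype.sum_eq_single (⟨d, ⟨(k : ℕ) + 1, by omega⟩⟩ : G.Dart × Fin m)]
  · rw [if_pos, one_mul]
    rw [step_pdart_iff G m hm]
    exact Or.inl ⟨rfl, rfl⟩
  · intro p hp
    rw [if_neg, zero_mul]
    rw [step_pdart_iff G m hm]
    rintro (⟨h1, h2⟩ | ⟨h1, -, -⟩)
    · exact hp (Prod.ext h1 (Fin.ext h2))
    · omega

lemma mulVec_pdart_last (hm : 1 ≤ m) (w : (subdivide G m).Dart → ℝ) (d : G.Dart)
    (k : Fin m) (hk : (k : ℕ) = m - 1) :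
    (B (subdivide G m)).mulVec w (pdart G m d k) =
      ∑ d' : G.Dart, (if Step G d d' then (1 : ℝ) else 0) *
        w (pdart G m d' ⟨0, by omega⟩) := by
  rw [mulVec_B_apply]
  rw [← Fintype.sum_bijective _ (pdart_bij G m hm)
    (fun p : G.Dart × Fin m =>
      (if Step (subdivide G m) (pdart G m d k) (pdart G m p.1 p.2) then (1 : ℝ) else 0) *
        w (pdart G m p.1 p.2)) _ (fun p => rfl)]
  rw [Fintype.sum_prod_type]
  refine Finset.sum_congr rfl fun d' _ => ?_
  rw [Fintype.sum_eq_single (⟨0, by omega⟩ : Fin m)]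
  · have hiff : Step (subdivide G m) (pdart G m d k) (pdart G m d' ⟨0, by omega⟩) ↔
        Step G d d' := by
      rw [step_pdart_iff G m hm]
      constructor
      · rintro (⟨-, h2⟩ | ⟨-, -, h⟩)
        · exact absurd h2 (by omega)
        · exact h
      · intro h; exact Or.inr ⟨hk, rfl, h⟩
    rw [if_congr hiff rfl rfl]
  · intro k' hk'
    rw [if_neg, zero_mul]
    rw [step_pdart_iff G m hm]
    rintro (⟨-, h2⟩ | ⟨-, h2, -⟩)
    · have := k'.isLt; omega
    · exact hk' (Fin.ext h2)

end AuxSub7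

section AuxSub8

variable {V : Type} [Fintype V] [DecidableEq V] (G : SimpleGraph V) [DecidableRel G.Adj]
variable (m : ℕ)

lemma card_darts_subdivide (hm : 1 ≤ m) :
    Fintype.card (subdivide G m).Dart = m * Fintype.card G.Dart := by
  rw [← Fintype.card_congr (Equiv.ofBijective _ (pdart_bij G m hm))]
  rw [Fintype.card_prod, Fintype.card_fin, Nat.mul_comm]

lemma prod_outdeg_subdivide (hm : 1 ≤ m) :
    ∏ x : (subdivide G m).Dart, (outdeg (subdivide G m) x : ℝ) =
      ∏ d : G.Dart, (outdeg G d : ℝ) := by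
  rw [← Fintype.prod_bijective _ (pdart_bij G m hm)
    (fun p : G.Dart × Fin m => (outdeg (subdivide G m) (pdart G m p.1 p.2) : ℝ)) _
    (fun p => rfl)]
  rw [Fintype.prod_prod_type]
  refine Finset.prod_congr rfl fun d _ => ?_
  have hval : ∀ k : Fin m, (outdeg (subdivide G m) (pdart G m d k) : ℝ) =
      if (k : ℕ) = m - 1 then (outdeg G d : ℝ) else 1 := by
    intro k
    rw [outdeg_pdart G m hm d k]
    split <;> simp
  calc ∏ k : Fin m, (outdeg (subdivide G m) (pdart G m d k) : ℝ)
      = ∏ k : Fin m, (if (k : ℕ) = m - 1 then (outdeg G d : ℝ) else 1) :=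
        Finset.prod_congr rfl fun k _ => hval k
    _ = (outdeg G d : ℝ) := by
        rw [Fintype.prod_eq_single (⟨m - 1, by omega⟩ : Fin m)]
        · rw [if_pos rfl]
        · intro k hk
          rw [if_neg (fun hc => hk (Fin.ext hc))]

end AuxSub8

/-- If `G` is NB-irreducible with `ρ(G) = Λ(G)` and `m ≥ 1`, then the
`m`-subdivision `G^m` satisfies `ρ(G^m) = Λ(G^m) = ρ(G)^{1/m}`. -/
theorem subdivision_rho_eq_Lambda (m : ℕ) (hm : 1 ≤ m)
    (h : NBIrreducible G) (heq : perron (B G) = Lambda G) :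
    perron (B (subdivide G m)) = Lambda (subdivide G m) ∧
    Lambda (subdivide G m) = perron (B G) ^ ((m : ℝ)⁻¹) := by
  classical
  obtain ⟨hconn, hdeg2, v₀, hv₀⟩ := h
  obtain ⟨u₀, hu₀⟩ := (G.degree_pos_iff_exists_adj v₀).mp (by omega)
  have hD : 0 < Fintype.card G.Dart := Fintype.card_pos_iff.mpr ⟨⟨(v₀, u₀), hu₀⟩⟩
  have hP1 : (1 : ℝ) ≤ ∏ d : G.Dart, (outdeg G d : ℝ) := by
    have hout : ∀ d ∈ (Finset.univ : Finset G.Dart), (1 : ℝ) ≤ (outdeg G d : ℝ) := by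
      intro d _
      have := hdeg2 d.snd
      rw [outdeg]
      exact Nat.one_le_cast.mpr (by omega)
    calc (1 : ℝ) = ∏ _d : G.Dart, (1 : ℝ) := by simp
      _ ≤ ∏ d : G.Dart, (outdeg G d : ℝ) :=
        Finset.prod_le_prod (fun i _ => zero_le_one) hout
  have hP0 : (0 : ℝ) < ∏ d : G.Dart, (outdeg G d : ℝ) := lt_of_lt_of_le one_pos hP1
  have hΛG : Lambda G =
      (∏ d : G.Dart, (outdeg G d : ℝ)) ^ ((Fintype.card G.Dart : ℝ))⁻¹ := rfl
  have hΛ' : Lambda (subdivide G m) =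
      (∏ d : G.Dart, (outdeg G d : ℝ)) ^ (((m : ℝ) * (Fintype.card G.Dart : ℝ))⁻¹) := by
    rw [Lambda, prod_outdeg_subdivide G m hm, card_darts_subdivide G m hm]
    norm_cast
  have hΛ1 : 1 ≤ Lambda G := by
    rw [hΛG]
    calc (1 : ℝ) = 1 ^ ((Fintype.card G.Dart : ℝ))⁻¹ := (Real.one_rpow _).symm
      _ ≤ _ := Real.rpow_le_rpow zero_le_one hP1 (by positivity)
  have hμ1 : 1 ≤ Lambda (subdivide G m) := by
    rw [hΛ']
    calc (1 : ℝ) = 1 ^ (((m : ℝ) * (Fintype.card G.Dart : ℝ))⁻¹) := (Real.one_rpow _).symm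
      _ ≤ _ := Real.rpow_le_rpow zero_le_one hP1 (by positivity)
  have hμpow : Lambda (subdivide G m) ^ m = Lambda G := by
    have hm0 : (m : ℝ) ≠ 0 := by positivity
    have hD0 : (Fintype.card G.Dart : ℝ) ≠ 0 := by positivity
    have e1 : ((m : ℝ) * (Fintype.card G.Dart : ℝ))⁻¹ * (m : ℕ) =
        ((Fintype.card G.Dart : ℝ))⁻¹ := by
      push_cast
      field_simp
    rw [hΛ', hΛG, ← Real.rpow_natCast
      ((∏ d : G.Dart, (outdeg G d : ℝ)) ^ (((m : ℝ) * (Fintype.card G.Dart : ℝ))⁻¹)) m,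
      ← Real.rpow_mul hP0.le, e1]
  have part2 : Lambda (subdivide G m) = perron (B G) ^ ((m : ℝ)⁻¹) := by
    have e2 : ((m : ℝ) * (Fintype.card G.Dart : ℝ))⁻¹ =
        ((Fintype.card G.Dart : ℝ))⁻¹ * ((m : ℝ))⁻¹ := by
      rw [mul_inv]
      ring
    rw [heq, hΛG, hΛ', e2, Real.rpow_mul hP0.le]
  have hSfin := eigset_finite (B G)
  have hS'fin := eigset_finite (B (subdivide G m))
  have hSne : (eigset (B G)).Nonempty := by
    by_contra hc
    rw [Set.not_nonempty_iff_eq_empty] at hc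
    have h0 : perron (B G) = 0 := by rw [perron_eq_sSup, hc, Real.sSup_empty]
    rw [heq] at h0
    linarith
  have hmemΛ : Lambda G ∈ eigset (B G) := by
    have := hSne.csSup_mem hSfin
    rwa [← perron_eq_sSup, heq] at this
  obtain ⟨v, hv0, hv⟩ := hmemΛ
  set μ := Lambda (subdivide G m) with hμdef
  set Ψ := Equiv.ofBijective _ (pdart_bij G m hm) with hΨ
  set w : (subdivide G m).Dart → ℝ :=
    fun y => μ ^ ((Ψ.symm y).2 : ℕ) * v (Ψ.symm y).1 with hwdef
  have hwΦ : ∀ (d : G.Dart) (k : Fin m), w (pdart G m d k) = μ ^ (k : ℕ) * v d := by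
    intro d k
    have hsymm : Ψ.symm (pdart G m d k) = (d, k) := by
      rw [show pdart G m d k = Ψ (d, k) from rfl, Equiv.symm_apply_apply]
    rw [hwdef]
    dsimp only
    rw [hsymm]
  have hweig : (B (subdivide G m)).mulVec w = μ • w := by
    funext x
    obtain ⟨⟨d, k⟩, rfl⟩ := pdart_surj G m hm x
    dsimp only
    rw [Pi.smul_apply, smul_eq_mul]
    by_cases hk : (k : ℕ) < m - 1
    · rw [mulVec_pdart_mid G m hm w d k hk, hwΦ, hwΦ, pow_succ]
      ring
    · have hk' : (k : ℕ) = m - 1 := by have := k.isLt; omega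
      rw [mulVec_pdart_last G m hm w d k hk']
      have hzero : ∀ d' : G.Dart, w (pdart G m d' ⟨0, by omega⟩) = v d' := fun d' => by
        rw [hwΦ]; simp
      have hmm : μ ^ m = μ * μ ^ (m - 1) := by
        conv_lhs => rw [show m = (m - 1) + 1 by omega]
        rw [pow_succ]
        ring
      calc ∑ d' : G.Dart, (if Step G d d' then (1 : ℝ) else 0) * w (pdart G m d' ⟨0, by omega⟩)
          = ∑ d' : G.Dart, (if Step G d d' then (1 : ℝ) else 0) * v d' :=
            Finset.sum_congr rfl fun d' _ => by rw [hzero]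
        _ = (B G).mulVec v d := (mulVec_B_apply G v d).symm
        _ = Lambda G * v d := by rw [hv, Pi.smul_apply, smul_eq_mul]
        _ = μ ^ m * v d := by rw [hμpow]
        _ = μ * w (pdart G m d k) := by rw [hwΦ, hk', hmm]; ring
  have hw0 : w ≠ 0 := by
    obtain ⟨d, hd⟩ := Function.ne_iff.mp hv0
    intro hc
    apply hd
    have hx := congrFun hc (pdart G m d ⟨0, by omega⟩)
    rw [hwΦ] at hx
    simpa using hx
  have hμmem : μ ∈ eigset (B (subdivide G m)) := ⟨w, hw0, hweig⟩
  have hge : μ ≤ perron (B (subdivide G m)) := le_csSup hS'fin.bddAbove hμmem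
  have hle : perron (B (subdivide G m)) ≤ μ := by
    rw [perron_eq_sSup]
    refine csSup_le ⟨μ, hμmem⟩ ?_
    rintro r ⟨w', hw'0, hw'⟩
    set u : G.Dart → ℝ := fun d => w' (pdart G m d ⟨0, by omega⟩) with hu
    have hkey : ∀ (k : ℕ) (hkm : k < m) (d : G.Dart),
        w' (pdart G m d ⟨k, hkm⟩) = r ^ k * u d := by
      intro k
      induction k with
      | zero => intro hkm d; simp [hu]
      | succ n ih =>
        intro hkm d
        have h1 := mulVec_pdart_mid G m hm w' d ⟨n, by omega⟩ (show n < m - 1 by omega)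
        rw [hw', Pi.smul_apply, smul_eq_mul, ih (by omega)] at h1
        rw [← h1]
        ring
    have hueig : (B G).mulVec u = (r ^ m) • u := by
      funext d
      have h1 := mulVec_pdart_last G m hm w' d ⟨m - 1, by omega⟩ rfl
      rw [hw', Pi.smul_apply, smul_eq_mul, hkey (m - 1) (by omega) d] at h1
      have hmm : r * (r ^ (m - 1) * u d) = r ^ m * u d := by
        conv_rhs => rw [show m = (m - 1) + 1 by omega]
        rw [pow_succ]
        ring
      rw [Pi.smul_apply, smul_eq_mul]
      calc (B G).mulVec u d
          = ∑ d' : G.Dart, (if Step G d d' then (1 : ℝ) else 0) * u d' := mulVec_B_apply G u d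
        _ = ∑ d' : G.Dart, (if Step G d d' then (1 : ℝ) else 0) *
              w' (pdart G m d' ⟨0, by omega⟩) := rfl
        _ = r * (r ^ (m - 1) * u d) := h1.symm
        _ = r ^ m * u d := hmm
    have hu0 : u ≠ 0 := by
      intro hc
      apply hw'0
      funext x
      obtain ⟨⟨d, k⟩, rfl⟩ := pdart_surj G m hm x
      dsimp only
      have hx := hkey (k : ℕ) k.isLt d
      rw [Fin.eta] at hx
      rw [hx, hc]
      simp
    have hrm : r ^ m ≤ Lambda G := by
      have hmem : r ^ m ∈ eigset (B G) := ⟨u, hu0, hueig⟩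
      have := le_csSup hSfin.bddAbove hmem
      rwa [← perron_eq_sSup, heq] at this
    rcases le_or_gt r 0 with hr | hr
    · exact hr.trans (by linarith)
    · have hpow : r ^ m ≤ μ ^ m := by rw [hμpow]; exact hrm
      exact (pow_le_pow_iff_left₀ hr.le (by linarith) (by omega)).mp hpow
  exact ⟨le_antisymm hle hge, part2⟩

end NB
end

section
/- Let G be an NB-irreducible graph satisfying the suspended path condition. Then there is a constant c = c(G), independent of ℓ and of the walk, such that every non-backtracking walk ω=(e_0,…,e_ℓ) ∈ Ω_ℓ satisfies |∑_{i=0}^{ℓ−1} log₂ outdeg(e_i) − ℓ·log₂ Λ(G)| ≤ c; consequently Var[R_ℓ] ≤ c' for some constant c'=c'(G) and all ℓ. -/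
open Finset Filter

namespace NB

variable {V : Type} [Fintype V] [DecidableEq V] (G : SimpleGraph V) [DecidableRel G.Adj]

set_option linter.unusedSectionVars false
set_option linter.unusedVariables false

section Aux

variable {V : Type} [Fintype V] [DecidableEq V] (G : SimpleGraph V) [DecidableRel G.Adj]

lemma step_indeg {d e : G.Dart} (h : Step G d e) : indeg G e = outdeg G d := by
  unfold indeg outdeg; rw [h.1]

lemma step_symm_iff (d e : G.Dart) : Step G e d ↔ Step G d.symm e.symm := by
  unfold Step
  simp only [SimpleGraph.Dart.symm_symm, SimpleGraph.Dart.symm_toProd, Prod.fst_swap,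
    Prod.snd_swap]
  constructor <;> (rintro ⟨a, b⟩; exact ⟨a.symm, b.symm⟩)

lemma card_succs (d : G.Dart) :
    (univ.filter (fun e : G.Dart => Step G d e)).card = outdeg G d := by
  have h1 : (univ.filter (fun e : G.Dart => Step G d e))
      = (univ.filter (fun e : G.Dart => e.fst = d.snd)).erase d.symm := by
    ext e
    simp only [Finset.mem_erase, Finset.mem_filter, Finset.mem_univ, true_and]
    unfold Step
    tauto
  have h2 : d.symm ∈ (univ.filter (fun e : G.Dart => e.fst = d.snd)) := by
    simp [SimpleGraph.Dart.symm]
  have h3 : (univ.filter (fun e : G.Dart => e.fst = d.snd)).card = G.degree d.snd :=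
    SimpleGraph.dart_fst_fiber_card_eq_degree G d.snd
  rw [h1, Finset.card_erase_of_mem h2, h3]; rfl

lemma card_preds (d : G.Dart) :
    (univ.filter (fun e : G.Dart => Step G e d)).card = indeg G d := by
  have h0 : indeg G d = outdeg G d.symm := by unfold indeg outdeg; rfl
  rw [h0, ← card_succs G d.symm]
  apply Finset.card_bij' (fun e _ => SimpleGraph.Dart.symm e) (fun e _ => SimpleGraph.Dart.symm e)
  · intro e he
    simp only [Finset.mem_filter, Finset.mem_univ, true_and] at he ⊢
    exact (step_symm_iff G d e).mp he
  · intro e he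
    simp only [Finset.mem_filter, Finset.mem_univ, true_and] at he ⊢
    rw [step_symm_iff G d e.symm]
    simpa using he
  · intro e _; exact SimpleGraph.Dart.symm_symm e
  · intro e _; exact SimpleGraph.Dart.symm_symm e

lemma indeg_pos (hmin : ∀ v, 2 ≤ G.degree v) (d : G.Dart) : 1 ≤ indeg G d := by
  have := hmin d.fst; unfold indeg; omega

lemma outdeg_pos (hmin : ∀ v, 2 ≤ G.degree v) (d : G.Dart) : 1 ≤ outdeg G d := by
  have := hmin d.snd; unfold outdeg; omega

lemma exists_pred (hmin : ∀ v, 2 ≤ G.degree v) (d : G.Dart) : ∃ e, Step G e d := by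
  have h := card_preds G d
  have h2 := indeg_pos G hmin d
  have : 0 < (univ.filter (fun e : G.Dart => Step G e d)).card := by omega
  obtain ⟨e, he⟩ := Finset.card_pos.mp this
  exact ⟨e, (Finset.mem_filter.mp he).2⟩

/-- A canonical predecessor of a dart. -/
noncomputable def pred (d : G.Dart) : G.Dart :=
  if h : ∃ e, Step G e d then h.choose else d

lemma pred_step (d : G.Dart) (h : ∃ e, Step G e d) : Step G (pred G d) d := by
  rw [pred, dif_pos h]; exact h.choose_spec

lemma step_eq_pred {e d : G.Dart} (h1 : indeg G d = 1) (h : Step G e d) : e = pred G d := by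
  have hc : (univ.filter (fun e : G.Dart => Step G e d)).card = 1 := by
    rw [card_preds]; exact h1
  obtain ⟨a, ha⟩ := Finset.card_eq_one.mp hc
  have he : e ∈ (univ.filter (fun e : G.Dart => Step G e d)) := by simp [h]
  have hp : pred G d ∈ (univ.filter (fun e : G.Dart => Step G e d)) := by
    simp [pred_step G d ⟨e, h⟩]
  rw [ha, Finset.mem_singleton] at he hp
  rw [he, hp]

end Aux
section Branch

variable {V : Type} [Fintype V] [DecidableEq V] (G : SimpleGraph V) [DecidableRel G.Adj]

lemma exists_branch (h : NBIrreducible G) (d : G.Dart) :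
    ∃ k, 1 < indeg G ((pred G)^[k] d) := by
  obtain ⟨hconn, hmin, v0, hv0⟩ := h
  by_contra hcon
  push_neg at hcon
  set q : ℕ → G.Dart := fun k => (pred G)^[k] d with hq
  have hq1 : ∀ k, indeg G (q k) = 1 := fun k => le_antisymm (hcon k) (indeg_pos G hmin _)
  have hstep : ∀ k, Step G (q (k+1)) (q k) := by
    intro k
    have h1 : q (k+1) = pred G (q k) := Function.iterate_succ_apply' _ _ _
    rw [h1]
    exact pred_step G _ (exists_pred G hmin _)
  have hdeg : ∀ k, G.degree (q k).fst = 2 := by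
    intro k
    have h1 := hq1 k
    have h2 := hmin (q k).fst
    unfold indeg at h1
    omega
  obtain ⟨a, b, hlt, he⟩ : ∃ a b, a < b ∧ q a = q b := by
    obtain ⟨x, y, hxy, hxy2⟩ := Finite.exists_ne_map_eq_of_infinite q
    rcases hxy.lt_or_gt with h' | h'
    · exact ⟨x, y, h', hxy2⟩
    · exact ⟨y, x, h', hxy2.symm⟩
  set p := b - a with hpdef
  have hp : 1 ≤ p := by omega
  have hqab : q (a + p) = q a := by
    have h1 : a + p = b := by omega
    rw [h1]; exact he.symm
  have hper : ∀ j, a ≤ j → q (j + p) = q j := by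
    intro j hj
    have e1 : j + p = (j - a) + (a + p) := by omega
    have e2 : j = (j - a) + a := by omega
    calc q (j + p) = (pred G)^[(j - a) + (a + p)] d := by rw [← e1]
      _ = (pred G)^[j - a] (q (a + p)) := Function.iterate_add_apply _ _ _ _
      _ = (pred G)^[j - a] (q a) := by rw [hqab]
      _ = (pred G)^[(j - a) + a] d := (Function.iterate_add_apply _ _ _ _).symm
      _ = q j := by rw [← e2]
  set T : V → Prop := fun v => ∃ j, a ≤ j ∧ v = (q j).fst with hT
  have hsnd : ∀ j, (q (j + 1)).snd = (q j).fst := fun j => (hstep j).1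
  have hne : ∀ j, (q j).snd ≠ (q (j + 1)).fst := by
    intro j hcc
    apply (hstep j).2
    apply SimpleGraph.Dart.ext
    apply Prod.ext
    · exact (hsnd j).symm
    · exact hcc
  have hclosed : ∀ v, T v → ∀ w, G.Adj v w → T w := by
    rintro v ⟨j, hj, rfl⟩ w hw
    have hmem1 : (q j).snd ∈ G.neighborFinset (q j).fst := by
      rw [SimpleGraph.mem_neighborFinset]; exact (q j).adj
    have hmem2 : (q (j + 1)).fst ∈ G.neighborFinset (q j).fst := by
      rw [SimpleGraph.mem_neighborFinset, ← hsnd j]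
      exact (q (j + 1)).adj.symm
    have hsub : ({(q j).snd, (q (j + 1)).fst} : Finset V) ⊆ G.neighborFinset (q j).fst := by
      intro x hx
      rcases Finset.mem_insert.mp hx with h' | h'
      · rw [h']; exact hmem1
      · rw [Finset.mem_singleton.mp h']; exact hmem2
    have hcard : (G.neighborFinset (q j).fst).card = 2 := by
      rw [SimpleGraph.card_neighborFinset_eq_degree]; exact hdeg j
    have hpair : ({(q j).snd, (q (j + 1)).fst} : Finset V).card = 2 := by
      rw [Finset.card_insert_of_notMem (by simp [hne j]), Finset.card_singleton]
    have heqset : ({(q j).snd, (q (j + 1)).fst} : Finset V) = G.neighborFinset (q j).fst :=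
      Finset.eq_of_subset_of_card_le hsub (by omega)
    have hwmem : w ∈ ({(q j).snd, (q (j + 1)).fst} : Finset V) := by
      rw [heqset, SimpleGraph.mem_neighborFinset]; exact hw
    rcases Finset.mem_insert.mp hwmem with h' | h'
    · refine ⟨j + p - 1, by omega, ?_⟩
      have e3 : (j + p - 1) + 1 = j + p := by omega
      calc w = (q j).snd := h'
        _ = (q (j + p)).snd := by rw [hper j hj]
        _ = (q ((j + p - 1) + 1)).snd := by rw [e3]
        _ = (q (j + p - 1)).fst := hsnd _
    · exact ⟨j + 1, by omega, Finset.mem_singleton.mp h'⟩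
  have hwalk : ∀ (u w : V), G.Walk u w → T u → T w := by
    intro u w pw
    induction pw with
    | nil => exact id
    | cons hadj _ ih => intro hu; exact ih (hclosed _ hu _ hadj)
  have hv0T : T v0 := by
    obtain ⟨pw⟩ := hconn.preconnected ((q a).fst) v0
    exact hwalk _ _ pw ⟨a, le_refl a, rfl⟩
  obtain ⟨j, hj, hv⟩ := hv0T
  rw [hv] at hv0
  have := hdeg j
  omega

end Branch
section Psi

variable {V : Type} [Fintype V] [DecidableEq V] (G : SimpleGraph V) [DecidableRel G.Adj]

open Classical in
/-- Number of backward steps to the nearest branching dart. -/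
noncomputable def brk (d : G.Dart) : ℕ :=
  if h : ∃ k, 1 < indeg G ((pred G)^[k] d) then Nat.find h else 0

open Classical in
lemma brk_spec (h : NBIrreducible G) (d : G.Dart) :
    1 < indeg G ((pred G)^[brk G d] d) := by
  have he := exists_branch G h d
  rw [brk, dif_pos he]
  exact Nat.find_spec he

open Classical in
lemma brk_min (h : NBIrreducible G) (d : G.Dart) {k : ℕ} (hk : k < brk G d) :
    indeg G ((pred G)^[k] d) = 1 := by
  have he := exists_branch G h d
  rw [brk, dif_pos he] at hk
  have h1 := Nat.find_min he hk
  have h2 := indeg_pos G h.2.1 ((pred G)^[k] d)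
  omega

/-- The corrector potential. -/
noncomputable def psi (d : G.Dart) : ℝ :=
  Real.logb 2 (indeg G ((pred G)^[brk G d] d)) / 2 - (brk G d) * Real.logb 2 (Lambda G)

lemma lambda_pos (hmin : ∀ v, 2 ≤ G.degree v) : 0 < Lambda G := by
  apply Real.rpow_pos_of_pos
  apply Finset.prod_pos
  intro d _
  have := outdeg_pos G hmin d
  exact_mod_cast Nat.lt_of_lt_of_le Nat.zero_lt_one (by exact_mod_cast this)

open Classical in
lemma brk_succ (h : NBIrreducible G) {d e : G.Dart} (hde : Step G d e) (h1 : indeg G e = 1) :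
    brk G e = brk G d + 1 ∧ ∀ k, (pred G)^[k + 1] e = (pred G)^[k] d := by
  have hpe : pred G e = d := (step_eq_pred G h1 hde).symm
  have hit : ∀ k, (pred G)^[k + 1] e = (pred G)^[k] d := by
    intro k
    rw [Function.iterate_succ_apply, hpe]
  have hed := exists_branch G h d
  have hee : ∃ k, 1 < indeg G ((pred G)^[k] e) := by
    obtain ⟨k, hk⟩ := hed
    exact ⟨k + 1, by rw [hit]; exact hk⟩
  refine ⟨?_, hit⟩
  rw [brk, dif_pos hee, brk, dif_pos hed, Nat.find_eq_iff]
  constructor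
  · rw [hit]; exact Nat.find_spec hed
  · intro k hk
    match k with
    | 0 => simp [h1]
    | k + 1 =>
      rw [hit]
      exact Nat.find_min hed (by omega)

lemma logb_outdeg_eq (h : NBIrreducible G) (hs : SuspendedPathCondition G)
    {d e : G.Dart} (hde : Step G d e) :
    Real.logb 2 (outdeg G d) = Real.logb 2 (Lambda G) + psi G e - psi G d := by
  have hmin := h.2.1
  rcases Nat.lt_or_ge 1 (indeg G e) with hbig | hsml
  · -- landing on a branching dart: use the suspended path condition
    have hbrk0 : brk G e = 0 := by
      classical
      have hee : ∃ k, 1 < indeg G ((pred G)^[k] e) := ⟨0, by simpa using hbig⟩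
      rw [brk, dif_pos hee, Nat.find_eq_zero]
      simpa using hbig
    set n := brk G d with hn
    set P : Fin (n + 1) → G.Dart := fun i => (pred G)^[n - (i : ℕ)] d with hP
    have hstepP : ∀ i : Fin n, Step G (P i.castSucc) (P i.succ) := by
      intro i
      have hi : (i : ℕ) < n := i.isLt
      have e1 : n - (i : ℕ) = (n - ((i : ℕ) + 1)) + 1 := by omega
      have : P i.castSucc = pred G (P i.succ) := by
        simp only [hP, Fin.coe_castSucc, Fin.val_succ]
        rw [e1, Function.iterate_succ_apply']
      rw [this]
      exact pred_step G _ (exists_pred G hmin _)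
    have hindegP : ∀ i : Fin n, indeg G (P i.succ) = 1 := by
      intro i
      have hi : (i : ℕ) < n := i.isLt
      apply brk_min G h d
      simp only [Fin.val_succ]
      omega
    have hsp : IsSuspendedPath G P := by
      refine ⟨hstepP, ?_, ?_, hindegP, ?_⟩
      · intro i
        rw [← step_indeg G (hstepP i)]
        exact hindegP i
      · have hlast : P (Fin.last n) = d := by
          simp [hP, Fin.val_last]
        rw [hlast, ← step_indeg G hde]
        exact hbig
      · have h0 : P 0 = (pred G)^[n] d := by simp [hP]
        rw [h0]
        exact brk_spec G h d
    have hcond := hs n P hsp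
    have hlast : P (Fin.last n) = d := by simp [hP, Fin.val_last]
    have h0 : P 0 = (pred G)^[n] d := by simp [hP]
    rw [hlast, h0] at hcond
    -- take logs
    have hL : 0 < Lambda G := lambda_pos G hmin
    have hD : (0 : ℝ) < (outdeg G d : ℝ) := by
      have := outdeg_pos G hmin d
      exact_mod_cast Nat.lt_of_lt_of_le Nat.zero_lt_one (by exact_mod_cast this)
    have hA : (0 : ℝ) < (indeg G ((pred G)^[n] d) : ℝ) := by
      have := brk_spec G h d
      rw [← hn] at this
      exact_mod_cast Nat.lt_of_le_of_lt (Nat.zero_le 1) this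
    have key : Real.logb 2 (outdeg G d) + Real.logb 2 (indeg G ((pred G)^[n] d))
        = (2 * ((n : ℝ) + 1)) * Real.logb 2 (Lambda G) := by
      rw [← Real.logb_mul (ne_of_gt hD) (ne_of_gt hA), hcond, Real.logb_pow]
      push_cast
      ring
    have hpsie : psi G e = Real.logb 2 (outdeg G d) / 2 := by
      rw [psi, hbrk0]
      simp only [Function.iterate_zero_apply, Nat.cast_zero, zero_mul, sub_zero]
      rw [step_indeg G hde]
    rw [hpsie, psi, ← hn]
    linarith [key]
  · -- continuing inside a suspended path
    have h1 : indeg G e = 1 := le_antisymm hsml (indeg_pos G hmin e)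
    obtain ⟨hbrk, hit⟩ := brk_succ G h hde h1
    have hout : outdeg G d = 1 := by rw [← step_indeg G hde]; exact h1
    rw [psi, psi, hbrk, hit (brk G d), hout]
    push_cast
    rw [Real.logb_one]
    ring

end Psi
section Telescope

variable {V : Type} [Fintype V] [DecidableEq V] (G : SimpleGraph V) [DecidableRel G.Adj]

lemma fin_telescope : ∀ {ℓ : ℕ} (f : Fin (ℓ + 1) → ℝ),
    ∑ i : Fin ℓ, (f i.succ - f i.castSucc) = f (Fin.last ℓ) - f 0 := by
  intro ℓ
  induction ℓ with
  | zero => intro f; simp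
  | succ n ih =>
    intro f
    rw [Fin.sum_univ_castSucc]
    have h : ∑ j : Fin n, (f (j.succ).castSucc - f (j.castSucc).castSucc)
        = f (Fin.last n).castSucc - f (0 : Fin (n + 1)).castSucc := ih (fun j => f j.castSucc)
    simp only [Fin.succ_castSucc]
    rw [h, Fin.succ_last, Fin.castSucc_zero]
    ring

lemma bits_eq (h : NBIrreducible G) (hs : SuspendedPathCondition G)
    {ℓ : ℕ} (ω : NBWalk G ℓ) :
    bits G ω = ℓ * Real.logb 2 (Lambda G)
      + (psi G (ω.1 (Fin.last ℓ)) - psi G (ω.1 0)) := by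
  unfold bits
  have hstep : ∀ i : Fin ℓ, Real.logb 2 (outdeg G (ω.1 i.castSucc)) =
      Real.logb 2 (Lambda G) + (psi G (ω.1 i.succ) - psi G (ω.1 i.castSucc)) := by
    intro i
    have := logb_outdeg_eq G h hs (ω.2 i)
    linarith
  rw [Finset.sum_congr rfl (fun i _ => hstep i), Finset.sum_add_distrib,
    fin_telescope (fun i => psi G (ω.1 i)), Finset.sum_const, Finset.card_univ,
    Fintype.card_fin, nsmul_eq_mul]

lemma bits_bound (h : NBIrreducible G) (hs : SuspendedPathCondition G)
    {ℓ : ℕ} (ω : NBWalk G ℓ) :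
    |bits G ω - ℓ * Real.logb 2 (Lambda G)| ≤ 2 * ∑ d : G.Dart, |psi G d| := by
  set M := ∑ d : G.Dart, |psi G d| with hM
  have hMd : ∀ d : G.Dart, |psi G d| ≤ M := by
    intro d
    exact Finset.single_le_sum (fun x _ => abs_nonneg (psi G x)) (Finset.mem_univ d)
  rw [bits_eq G h hs ω]
  have h1 : |psi G (ω.1 (Fin.last ℓ)) - psi G (ω.1 0)| ≤ 2 * M := by
    calc |psi G (ω.1 (Fin.last ℓ)) - psi G (ω.1 0)|
        ≤ |psi G (ω.1 (Fin.last ℓ))| + |psi G (ω.1 0)| := abs_sub _ _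
      _ ≤ 2 * M := by have := hMd (ω.1 (Fin.last ℓ)); have := hMd (ω.1 0); linarith
  calc |↑ℓ * Real.logb 2 (Lambda G) + (psi G (ω.1 (Fin.last ℓ)) - psi G (ω.1 0))
        - ↑ℓ * Real.logb 2 (Lambda G)|
      = |psi G (ω.1 (Fin.last ℓ)) - psi G (ω.1 0)| := by ring_nf
    _ ≤ 2 * M := h1

end Telescope
section WZero

variable {V : Type} [Fintype V] [DecidableEq V] (G : SimpleGraph V) [DecidableRel G.Adj]

/-- Length-zero walks are just darts. -/
def walkZeroEquiv : NBWalk G 0 ≃ G.Dart where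
  toFun ω := ω.1 0
  invFun d := ⟨fun _ => d, fun i => i.elim0⟩
  left_inv ω := Subtype.ext (funext fun i => by have h0 : i = 0 := Fin.ext (by omega); rw [h0])
  right_inv d := rfl

end WZero
section Weight

variable {V : Type} [Fintype V] [DecidableEq V] (G : SimpleGraph V) [DecidableRel G.Adj]

/-- Extending a walk by one dart. -/
def snocWalk {ℓ : ℕ}
    (σ : Σ ω : NBWalk G ℓ, {e : G.Dart // Step G (ω.1 (Fin.last ℓ)) e}) :
    NBWalk G (ℓ + 1) := by
  refine ⟨Fin.snoc σ.1.1 σ.2.1, ?_⟩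
  intro i
  refine Fin.lastCases ?_ ?_ i
  · rw [Fin.succ_last, Fin.snoc_last, Fin.snoc_castSucc]
    exact σ.2.2
  · intro j
    rw [Fin.succ_castSucc, Fin.snoc_castSucc, Fin.snoc_castSucc]
    exact σ.1.2 j

lemma snocWalk_bijective (ℓ : ℕ) : Function.Bijective (snocWalk G (ℓ := ℓ)) := by
  constructor
  · rintro ⟨⟨f, hf⟩, ⟨e, he⟩⟩ ⟨⟨f', hf'⟩, ⟨e', he'⟩⟩ hEq
    have hval : (Fin.snoc f e : Fin (ℓ + 2) → G.Dart) = Fin.snoc f' e' :=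
      congrArg Subtype.val hEq
    have hfeq : f = f' := by
      funext i
      have := congrFun hval i.castSucc
      rwa [Fin.snoc_castSucc, Fin.snoc_castSucc] at this
    subst hfeq
    have heeq : e = e' := by
      have := congrFun hval (Fin.last (ℓ + 1))
      rwa [Fin.snoc_last, Fin.snoc_last] at this
    subst heeq
    rfl
  · rintro ⟨w, hw⟩
    refine ⟨⟨⟨fun i => w i.castSucc, ?_⟩, ⟨w (Fin.last (ℓ + 1)), ?_⟩⟩, ?_⟩
    · intro i
      have := hw i.castSucc
      rwa [Fin.succ_castSucc] at this
    · have := hw (Fin.last ℓ)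
      rwa [Fin.succ_last] at this
    · apply Subtype.ext
      exact Fin.snoc_init_self w

lemma weight_nonneg {ℓ : ℕ} (ω : NBWalk G ℓ) :
    0 ≤ ∏ i : Fin ℓ, ((outdeg G (ω.1 i.castSucc) : ℝ))⁻¹ :=
  Finset.prod_nonneg (fun i _ => by positivity)

lemma sum_weight (hmin : ∀ v, 2 ≤ G.degree v) (ℓ : ℕ) :
    ∑ ω : NBWalk G ℓ, (∏ i : Fin ℓ, ((outdeg G (ω.1 i.castSucc) : ℝ))⁻¹)
      = Fintype.card G.Dart := by
  induction ℓ with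
  | zero =>
    have hzero : ∀ ω : NBWalk G 0,
        (∏ i : Fin 0, ((outdeg G (ω.1 i.castSucc) : ℝ))⁻¹) = 1 := by
      intro ω; simp
    rw [Finset.sum_congr rfl (fun ω _ => hzero ω), Finset.sum_const, Finset.card_univ,
      Fintype.card_congr (walkZeroEquiv G)]
    simp
  | succ n ih =>
    rw [← Fintype.sum_bijective (snocWalk G) (snocWalk_bijective G n) _ _ (fun σ => rfl)]
    rw [← Finset.univ_sigma_univ, Finset.sum_sigma]
    have hinner : ∀ ω : NBWalk G n,
        (∑ e : {e : G.Dart // Step G (ω.1 (Fin.last n)) e},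
          ∏ i : Fin (n + 1), ((outdeg G ((snocWalk G ⟨ω, e⟩).1 i.castSucc) : ℝ))⁻¹)
        = ∏ i : Fin n, ((outdeg G (ω.1 i.castSucc) : ℝ))⁻¹ := by
      intro ω
      have hw : ∀ e : {e : G.Dart // Step G (ω.1 (Fin.last n)) e},
          (∏ i : Fin (n + 1), ((outdeg G ((snocWalk G ⟨ω, e⟩).1 i.castSucc) : ℝ))⁻¹)
          = (∏ i : Fin n, ((outdeg G (ω.1 i.castSucc) : ℝ))⁻¹)
            * ((outdeg G (ω.1 (Fin.last n)) : ℝ))⁻¹ := by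
        intro e
        rw [Fin.prod_univ_castSucc]
        have hv : ∀ j : Fin (n + 1), (snocWalk G ⟨ω, e⟩).1 j.castSucc = ω.1 j := by
          intro j
          show (Fin.snoc ω.1 e.1 : Fin (n + 2) → G.Dart) j.castSucc = ω.1 j
          exact Fin.snoc_castSucc _ _ _
        rw [hv (Fin.last n)]
        congr 1
        apply Finset.prod_congr rfl
        intro i _
        rw [hv i.castSucc]
      rw [Finset.sum_congr rfl (fun e _ => hw e), Finset.sum_const, Finset.card_univ]
      have hcard : Fintype.card {e : G.Dart // Step G (ω.1 (Fin.last n)) e}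
          = outdeg G (ω.1 (Fin.last n)) := by
        rw [Fintype.card_subtype]
        exact card_succs G _
      rw [hcard, nsmul_eq_mul, mul_comm ((outdeg G (ω.1 (Fin.last n)) : ℝ)) _, mul_assoc]
      have hne : ((outdeg G (ω.1 (Fin.last n)) : ℝ)) ≠ 0 := by
        have := outdeg_pos G hmin (ω.1 (Fin.last n))
        positivity
      rw [inv_mul_cancel₀ hne, mul_one]
    rw [Finset.sum_congr rfl (fun ω _ => hinner ω)]
    exact ih

end Weight
/-- Under the suspended path condition there is a constant `c` with
`|R_ℓ(ω) − ℓ·log₂ Λ| ≤ c` for every walk, hence `Var[R_ℓ]` is uniformly bounded. -/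
theorem bits_bounded_fluctuation (h : NBIrreducible G)
    (hs : SuspendedPathCondition G) :
    ∃ c : ℝ,
      (∀ (ℓ : ℕ) (ω : NBWalk G ℓ),
        |bits G ω - (ℓ : ℝ) * Real.logb 2 (Lambda G)| ≤ c) ∧
      ∃ c' : ℝ, ∀ ℓ : ℕ, var G (fun ω : NBWalk G ℓ => bits G ω) ≤ c' := by
  have hmin := h.2.1
  set M := ∑ d : G.Dart, |psi G d| with hMdef
  have hM0 : 0 ≤ M := Finset.sum_nonneg (fun d _ => abs_nonneg _)
  refine ⟨2 * M, fun ℓ ω => bits_bound G h hs ω, (4 * M) ^ 2, fun ℓ => ?_⟩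
  -- the dart type is nonempty
  obtain ⟨v⟩ : Nonempty V := h.1.nonempty
  have hdegv : 0 < G.degree v := by have := hmin v; omega
  obtain ⟨w, hw⟩ := (SimpleGraph.degree_pos_iff_exists_adj G v).mp hdegv
  have hcard : (0 : ℝ) < (Fintype.card G.Dart : ℝ) := by
    have : 0 < Fintype.card G.Dart := Fintype.card_pos_iff.mpr ⟨⟨(v, w), hw⟩⟩
    exact_mod_cast this
  have hmu0 : ∀ ω : NBWalk G ℓ, 0 ≤ mu G ω := by
    intro ω
    unfold mu
    exact mul_nonneg (by positivity) (weight_nonneg G ω)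
  have hS : ∑ ω : NBWalk G ℓ, mu G ω = 1 := by
    unfold mu
    rw [← Finset.mul_sum, sum_weight G hmin ℓ, inv_mul_cancel₀ (ne_of_gt hcard)]
  set L := Real.logb 2 (Lambda G) with hL
  have hEb : |expect G (fun ω : NBWalk G ℓ => bits G ω) - ℓ * L| ≤ 2 * M := by
    have h1 : expect G (fun ω : NBWalk G ℓ => bits G ω) - ℓ * L
        = ∑ ω : NBWalk G ℓ, mu G ω * (bits G ω - ℓ * L) := by
      unfold expect
      simp only [mul_sub]
      rw [Finset.sum_sub_distrib, ← Finset.sum_mul, hS, one_mul]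
    rw [h1]
    calc |∑ ω : NBWalk G ℓ, mu G ω * (bits G ω - ℓ * L)|
        ≤ ∑ ω : NBWalk G ℓ, |mu G ω * (bits G ω - ℓ * L)| :=
          Finset.abs_sum_le_sum_abs _ _
      _ ≤ ∑ ω : NBWalk G ℓ, mu G ω * (2 * M) := by
          apply Finset.sum_le_sum
          intro ω _
          rw [abs_mul, abs_of_nonneg (hmu0 ω)]
          exact mul_le_mul_of_nonneg_left (bits_bound G h hs ω) (hmu0 ω)
      _ = 2 * M := by rw [← Finset.sum_mul, hS, one_mul]
  unfold var expect
  have hptwise : ∀ ω : NBWalk G ℓ,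
      (bits G ω - ∑ ω' : NBWalk G ℓ, mu G ω' * bits G ω') ^ 2 ≤ (4 * M) ^ 2 := by
    intro ω
    have hEeq : expect G (fun ω : NBWalk G ℓ => bits G ω)
        = ∑ ω' : NBWalk G ℓ, mu G ω' * bits G ω' := rfl
    rw [hEeq] at hEb
    have hb := bits_bound G h hs ω
    have habs : |bits G ω - ∑ ω' : NBWalk G ℓ, mu G ω' * bits G ω'| ≤ 4 * M := by
      have h2 : bits G ω - ∑ ω' : NBWalk G ℓ, mu G ω' * bits G ω'
          = (bits G ω - ℓ * L) - ((∑ ω' : NBWalk G ℓ, mu G ω' * bits G ω') - ℓ * L) := by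
        ring
      rw [h2]
      calc |(bits G ω - ℓ * L) - ((∑ ω' : NBWalk G ℓ, mu G ω' * bits G ω') - ℓ * L)|
          ≤ |bits G ω - ℓ * L| + |(∑ ω' : NBWalk G ℓ, mu G ω' * bits G ω') - ℓ * L| :=
            abs_sub _ _
        _ ≤ 4 * M := by rw [← hL, ← hMdef] at hb; linarith
    obtain ⟨ha1, ha2⟩ := abs_le.mp habs
    exact sq_le_sq' (by linarith) ha2
  calc ∑ ω : NBWalk G ℓ, mu G ω * (bits G ω - ∑ ω' : NBWalk G ℓ, mu G ω' * bits G ω') ^ 2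
      ≤ ∑ ω : NBWalk G ℓ, mu G ω * (4 * M) ^ 2 := by
        apply Finset.sum_le_sum
        intro ω _
        exact mul_le_mul_of_nonneg_left (hptwise ω) (hmu0 ω)
    _ = (4 * M) ^ 2 := by rw [← Finset.sum_mul, hS, one_mul]

end NB
end
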